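/- Let λ, μ, γ be real numbers with λ + μ + γ ≠ 0, and let M(λ,μ,γ) be the 3×3 real matrix whose rows are (λ,λ,λ), (μ,μ,μ), (γ,γ,γ). If one of the following holds: (1) λ ≠ 0, μ = 0, γ = 0; (2) μ ≠ 0, λ = 0, γ = 0; (3) γ ≠ 0, λ = 0, μ = 0; then the evolution algebra E_{M(λ,μ,γ)} is isomorphic to the evolution algebra E₄ whose structure matrix has rows (1,0,0), (0,0,0), (0,0,0). -/

import Mathlib

/-- Evolution algebra multiplication on ℝ³ determined by a structure matrix `A`:
`(x ∗_A y) j = ∑ i, x i * y i * A i j`. -/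
def evolMul (A : Matrix (Fin 3) (Fin 3) ℝ) (x y : Fin 3 → ℝ) : Fin 3 → ℝ :=
  fun j => ∑ i, x i * y i * A i j

/-- The evolution algebras with structure matrices `A` and `B` are isomorphic:
there is an ℝ-linear equivalence of ℝ³ intertwining the two multiplications. -/
def EvolIso (A B : Matrix (Fin 3) (Fin 3) ℝ) : Prop :=
  ∃ f : (Fin 3 → ℝ) ≃ₗ[ℝ] (Fin 3 → ℝ),
    ∀ x y, f (evolMul A x y) = evolMul B (f x) (f y)

/-!
If only the generator `eₖ` has a nonzero square, `eₖ² = c (e₁ + e₂ + e₃)` with `c ≠ 0`, then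
`w = c⁻¹ (e₁ + e₂ + e₃)` is idempotent and `x y = (c xₖ)(c yₖ) w`. Hence a linear bijection sending
`w` to `e₁` and `x` to a vector with first coordinate `c xₖ` is an isomorphism onto `E₄`. For `k = 1`
the matrix `!![c, 0, 0; -1, 1, 0; -1, 0, 1]` does this; the other two cases reduce to it by
relabelling the generators.
-/

theorem EvolIso.trans {A B C : Matrix (Fin 3) (Fin 3) ℝ} (hAB : EvolIso A B) (hBC : EvolIso B C) :
    EvolIso A C := by
  obtain ⟨f, hf⟩ := hAB
  obtain ⟨g, hg⟩ := hBC
  exact ⟨f.trans g, fun x y => by simp only [LinearEquiv.trans_apply, hf, hg]⟩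

theorem evolIso_submatrix (A : Matrix (Fin 3) (Fin 3) ℝ) (σ : Equiv.Perm (Fin 3)) :
    EvolIso A (A.submatrix σ σ) := by
  refine ⟨LinearEquiv.funCongrLeft ℝ ℝ σ, fun x y => funext fun j => ?_⟩
  simp only [LinearEquiv.funCongrLeft_apply, LinearMap.funLeft_apply, evolMul,
    Matrix.submatrix_apply]
  exact (Equiv.sum_comp σ fun i => x i * y i * A i (σ j)).symm

theorem evolIso_singleRow {c : ℝ} (hc : c ≠ 0) :
    EvolIso !![c, c, c; 0, 0, 0; 0, 0, 0] !![1, 0, 0; 0, 0, 0; 0, 0, 0] := by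
  let P : Matrix (Fin 3) (Fin 3) ℝ := !![c, 0, 0; -1, 1, 0; -1, 0, 1]
  have hdet : IsUnit P.det := by
    simpa [P, Matrix.det_fin_three] using hc
  let f := P.toLinearEquiv' (P.invertibleOfIsUnitDet hdet)
  have hf : ∀ v, f v = P.mulVec v := fun _ => rfl
  refine ⟨f, fun x y => funext fun j => ?_⟩
  simp only [hf]
  fin_cases j <;>
    simp [P, evolMul, Matrix.mulVec, dotProduct, Fin.sum_univ_three, mul_assoc, mul_comm,
      mul_left_comm]

theorem stmt_general (l m g : ℝ)
    (h : (l ≠ 0 ∧ m = 0 ∧ g = 0) ∨ (m ≠ 0 ∧ l = 0 ∧ g = 0) ∨ (g ≠ 0 ∧ l = 0 ∧ m = 0)) :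
    EvolIso (!![l, l, l; m, m, m; g, g, g] : Matrix (Fin 3) (Fin 3) ℝ) (!![1, 0, 0; 0, 0, 0; 0, 0, 0] : Matrix (Fin 3) (Fin 3) ℝ) := by
  rcases h with ⟨hl, rfl, rfl⟩ | ⟨hm, rfl, rfl⟩ | ⟨hg, rfl, rfl⟩
  · exact evolIso_singleRow hl
  · have hswap : (!![0, 0, 0; m, m, m; 0, 0, 0] : Matrix (Fin 3) (Fin 3) ℝ).submatrix
        (Equiv.swap 0 1) (Equiv.swap 0 1) = !![m, m, m; 0, 0, 0; 0, 0, 0] := by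
      ext i j; fin_cases i <;> fin_cases j <;> rfl
    exact (hswap ▸ evolIso_submatrix _ _).trans (evolIso_singleRow hm)
  · have hswap : (!![0, 0, 0; 0, 0, 0; g, g, g] : Matrix (Fin 3) (Fin 3) ℝ).submatrix
        (Equiv.swap 0 2) (Equiv.swap 0 2) = !![g, g, g; 0, 0, 0; 0, 0, 0] := by
      ext i j; fin_cases i <;> fin_cases j <;> rfl
    exact (hswap ▸ evolIso_submatrix _ _).trans (evolIso_singleRow hg)

theorem stmt (l m g : ℝ) (hsum : l + m + g ≠ 0)
    (h : (l ≠ 0 ∧ m = 0 ∧ g = 0) ∨ (m ≠ 0 ∧ l = 0 ∧ g = 0) ∨ (g ≠ 0 ∧ l = 0 ∧ m = 0)) :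
    EvolIso (!![l, l, l; m, m, m; g, g, g] : Matrix (Fin 3) (Fin 3) ℝ) (!![1, 0, 0; 0, 0, 0; 0, 0, 0] : Matrix (Fin 3) (Fin 3) ℝ) :=
  stmt_general l m g h
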